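/- Fix an integer h ≥ 2, let 1 ≤ k, l ≤ h−1 and i, j ∈ ℤ. Then dim_ℂ Hom(M_{k,i}, M_{l,j}) = dim_ℂ Hom(M_{l,j}, M_{h−k, k+i−1}), where M_{h−k, k+i−1} represents the shifted object M_{k,i−1}[1]. -/

import Mathlib

open Polynomial

noncomputable section

/-- Polynomials in `ℂ[x]` that are homogeneous (monomial) of degree `d ∈ ℤ`; by
convention this is `{0}` when `d < 0` or when no monomial of that degree exists. -/
def homogDeg (d : ℤ) : Submodule ℂ (Polynomial ℂ) where
  carrier := {p | ∀ n : ℕ, p.coeff n ≠ 0 → (n : ℤ) = d}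
  zero_mem' := by intro n hn; simp at hn
  add_mem' := by
    intro p q hp hq n hn
    rw [Polynomial.coeff_add] at hn
    by_cases h1 : p.coeff n = 0
    · exact hq n (by simpa [h1] using hn)
    · exact hp n h1
  smul_mem' := by
    intro c p hp n hn
    rw [Polynomial.coeff_smul, smul_eq_mul] at hn
    exact hp n (right_ne_zero_of_mul hn)

/-- The submodule of pairs `(p, q)` intertwining `Q_k` and `Q_l`:
`x^l·p = x^k·q` and `x^{h−l}·q = x^{h−k}·p`. -/
def intertwine (h k l : ℕ) : Submodule ℂ (Polynomial ℂ × Polynomial ℂ) where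
  carrier := {pq | X ^ l * pq.1 = X ^ k * pq.2 ∧ X ^ (h - l) * pq.2 = X ^ (h - k) * pq.1}
  zero_mem' := by simp
  add_mem' := by
    rintro a b ⟨ha1, ha2⟩ ⟨hb1, hb2⟩
    constructor <;> simp [mul_add, ha1, ha2, hb1, hb2]
  smul_mem' := by
    rintro c a ⟨ha1, ha2⟩
    constructor <;> simp [Algebra.mul_smul_comm, ha1, ha2]

/-- The closed degree-0 graded morphisms from `M_{k,i}` to `M_{l,j}`: pairs `(p, q)` of
homogeneous polynomials of degrees `j−i` and `(l+j)−(k+i)` with `Q_l·diag(p,q) = diag(p,q)·Q_k`. -/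
def closedMor (h k l : ℕ) (i j : ℤ) : Submodule ℂ (Polynomial ℂ × Polynomial ℂ) :=
  ((homogDeg (j - i)).prod (homogDeg (((l : ℤ) + j) - ((k : ℤ) + i)))) ⊓ intertwine h k l

/-- The linear map sending a homotopy `(ψ₁, ψ₂)` to the null-homotopic morphism
`(x^{h−l}·ψ₂ + x^k·ψ₁, x^l·ψ₁ + x^{h−k}·ψ₂)`. -/
def htpyMap (h k l : ℕ) : (Polynomial ℂ × Polynomial ℂ) →ₗ[ℂ] (Polynomial ℂ × Polynomial ℂ) where
  toFun ψ := (X ^ (h - l) * ψ.2 + X ^ k * ψ.1, X ^ l * ψ.1 + X ^ (h - k) * ψ.2)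
  map_add' := by
    intro a b
    simp only [Prod.fst_add, Prod.snd_add, mul_add, Prod.mk_add_mk]
    exact Prod.ext (by ring) (by ring)
  map_smul' := by
    intro c a
    simp only [Prod.smul_fst, Prod.smul_snd, Algebra.mul_smul_comm, RingHom.id_apply,
      Prod.smul_mk, smul_add]

/-- The null-homotopic degree-0 graded morphisms from `M_{k,i}` to `M_{l,j}`: those of the
form `(x^{h−l}·ψ₂ + x^k·ψ₁, x^l·ψ₁ + x^{h−k}·ψ₂)` for homogeneous `ψ₁, ψ₂` of degrees
`j−(k+i)` and `(l+j)−i−h`. -/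
def nullHtpyMor (h k l : ℕ) (i j : ℤ) : Submodule ℂ (Polynomial ℂ × Polynomial ℂ) :=
  Submodule.map (htpyMap h k l)
    ((homogDeg (j - ((k : ℤ) + i))).prod (homogDeg (((l : ℤ) + j) - i - (h : ℤ))))

/-- `Hom(M_{k,i}, M_{l,j})` in `D^b_ℤ(𝒜_{x^h})`: closed degree-0 graded morphisms modulo
null-homotopic ones. -/
abbrev HomMF (h k l : ℕ) (i j : ℤ) : Type :=
  closedMor h k l i j ⧸ ((nullHtpyMor h k l i j).comap (closedMor h k l i j).subtype)

/-
Write `a = j − i` and `b = l + j − (k + i)` for the degrees of a morphism `M_{k,i} → M_{l,j}`.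
Homogeneous polynomials are scalar multiples of monomials, and `x^l·p = x^k·q` forces the two
scalars to agree, so the closed morphisms are the line spanned by `(x^a, x^b)` when `a, b ≥ 0`
and are zero otherwise. Both homotopies produce exactly this monomial pair, so it is
null-homotopic iff `a ≥ k` or `b ≥ h − k`. Hence `Hom(M_{k,i}, M_{l,j})` is one-dimensional
when `max(0, k − l) ≤ a < min(k, h − l)` and zero otherwise. For `Hom(M_{l,j}, M_{h−k,k+i−1})`
the degree is `a' = k − 1 − a`, and the window `max(0, l + k − h) ≤ a' < min(l, k)` is the
image of the first one under `a ↦ k − 1 − a`.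
-/

open Classical in
theorem Submodule.finrank_span_singleton_quotient_comap {K V : Type*} [Field K]
    [AddCommGroup V] [Module K V] {v : V} (hv : v ≠ 0) (N : Submodule K V) :
    Module.finrank K ((K ∙ v) ⧸ N.comap (K ∙ v).subtype) = if v ∈ N then 0 else 1 := by
  split_ifs with hvN
  · have : Subsingleton ((K ∙ v) ⧸ N.comap (K ∙ v).subtype) := by
      rw [Submodule.Quotient.subsingleton_iff, Submodule.comap_subtype_eq_top,
        Submodule.span_singleton_le_iff_mem]
      exact hvN
    exact Module.finrank_zero_of_subsingleton
  · have hbot : N.comap (K ∙ v).subtype = ⊥ :=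
      Submodule.disjoint_iff_comap_eq_bot.mp (Submodule.disjoint_span_singleton_of_notMem hvN).symm
    rw [(Submodule.quotEquivOfEqBot _ hbot).finrank_eq, finrank_span_singleton hv]

theorem homogDeg_eq_bot {d : ℤ} (hd : d < 0) : homogDeg d = ⊥ := by
  refine (Submodule.eq_bot_iff _).mpr fun p hp => ?_
  ext n
  by_contra hn
  have := hp n hn
  omega

theorem eq_C_mul_X_pow_of_mem_homogDeg {d : ℤ} {p : ℂ[X]} (hp : p ∈ homogDeg d) :
    p = C (p.coeff d.toNat) * X ^ d.toNat := by
  ext n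
  rw [coeff_C_mul, coeff_X_pow]
  by_cases hn : n = d.toNat
  · simp [hn]
  · rw [if_neg hn, mul_zero]
    by_contra hc
    have := hp n hc
    omega

theorem X_pow_toNat_mem_homogDeg {d : ℤ} (hd : 0 ≤ d) : (X : ℂ[X]) ^ d.toNat ∈ homogDeg d := by
  intro n hn
  rw [coeff_X_pow] at hn
  split_ifs at hn
  · omega
  · exact absurd rfl hn

theorem X_pow_mul_X_pow_eq {m n m' n' : ℕ} (h : m + n = m' + n') :
    (X : ℂ[X]) ^ m * X ^ n = X ^ m' * X ^ n' := by
  rw [← pow_add, ← pow_add, h]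

def monomialPair (a b : ℤ) : ℂ[X] × ℂ[X] := (X ^ a.toNat, X ^ b.toNat)

theorem monomialPair_ne_zero (a b : ℤ) : monomialPair a b ≠ 0 :=
  fun h => pow_ne_zero _ X_ne_zero (congrArg Prod.fst h)

section Morphisms

variable {h k l : ℕ} {i j : ℤ}

theorem mem_closedMor {p q : ℂ[X]} :
    (p, q) ∈ closedMor h k l i j ↔ p ∈ homogDeg (j - i) ∧ q ∈ homogDeg ((l : ℤ) + j - (k + i)) ∧
      X ^ l * p = X ^ k * q ∧ X ^ (h - l) * q = X ^ (h - k) * p :=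
  and_assoc

theorem closedMor_eq_bot (hab : j - i < 0 ∨ (l : ℤ) + j - (k + i) < 0) :
    closedMor h k l i j = ⊥ := by
  refine (Submodule.eq_bot_iff _).mpr ?_
  rintro ⟨p, q⟩ hmem
  obtain ⟨hp, hq, hpq, -⟩ := mem_closedMor.mp hmem
  rcases hab with ha | hb
  · rw [homogDeg_eq_bot ha, Submodule.mem_bot] at hp
    rw [hp, mul_zero, zero_eq_mul] at hpq
    simp [hp, hpq.resolve_left (pow_ne_zero _ X_ne_zero)]
  · rw [homogDeg_eq_bot hb, Submodule.mem_bot] at hq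
    rw [hq, mul_zero, mul_eq_zero] at hpq
    simp [hq, hpq.resolve_left (pow_ne_zero _ X_ne_zero)]

theorem closedMor_eq_span (hk : k ≤ h) (hl : l ≤ h) (ha : 0 ≤ j - i)
    (hb : 0 ≤ (l : ℤ) + j - (k + i)) :
    closedMor h k l i j = ℂ ∙ monomialPair (j - i) ((l : ℤ) + j - (k + i)) := by
  refine le_antisymm ?_ ((Submodule.span_singleton_le_iff_mem _ _).mpr ?_)
  · rintro ⟨p, q⟩ hmem
    obtain ⟨hp, hq, hpq, -⟩ := mem_closedMor.mp hmem
    rw [eq_C_mul_X_pow_of_mem_homogDeg hp, eq_C_mul_X_pow_of_mem_homogDeg hq] at hpq ⊢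
    set a := (j - i).toNat
    set b := ((l : ℤ) + j - (k + i)).toNat
    have hab : l + a = k + b := by omega
    have hcoeff : p.coeff a = q.coeff b := by
      apply C_injective
      apply mul_left_cancel₀ (pow_ne_zero (l + a) (X_ne_zero (R := ℂ)))
      calc X ^ (l + a) * C (p.coeff a) = X ^ l * (C (p.coeff a) * X ^ a) := by ring
        _ = X ^ k * (C (q.coeff b) * X ^ b) := hpq
        _ = X ^ (l + a) * C (q.coeff b) := by rw [hab]; ring
    refine Submodule.mem_span_singleton.mpr ⟨p.coeff a, ?_⟩
    simp only [monomialPair, Prod.smul_mk, smul_eq_C_mul, hcoeff]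
    rfl
  · exact mem_closedMor.mpr ⟨X_pow_toNat_mem_homogDeg ha, X_pow_toNat_mem_homogDeg hb,
      X_pow_mul_X_pow_eq (by omega), X_pow_mul_X_pow_eq (by omega)⟩

theorem nullHtpyMor_eq_bot (h₁ : j - (k + i) < 0) (h₂ : (l : ℤ) + j - i - h < 0) :
    nullHtpyMor h k l i j = ⊥ := by
  rw [nullHtpyMor, homogDeg_eq_bot h₁, homogDeg_eq_bot h₂, Submodule.prod_bot,
    Submodule.map_bot]

theorem monomialPair_mem_nullHtpyMor_iff (hk : k ≤ h) (hl : l ≤ h) :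
    monomialPair (j - i) ((l : ℤ) + j - (k + i)) ∈ nullHtpyMor h k l i j ↔
      0 ≤ j - (k + i) ∨ 0 ≤ (l : ℤ) + j - i - h := by
  refine ⟨fun hmem => ?_, ?_⟩
  · by_contra! hneg
    rw [nullHtpyMor_eq_bot hneg.1 hneg.2, Submodule.mem_bot] at hmem
    exact monomialPair_ne_zero _ _ hmem
  · rintro (h₁ | h₂)
    · refine ⟨(X ^ (j - (k + i)).toNat, 0),
        ⟨X_pow_toNat_mem_homogDeg h₁, Submodule.zero_mem _⟩, ?_⟩
      simp only [htpyMap, LinearMap.coe_mk, AddHom.coe_mk, mul_zero, zero_add, add_zero,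
        monomialPair, ← pow_add]
      congr 2 <;> omega
    · refine ⟨(0, X ^ ((l : ℤ) + j - i - h).toNat),
        ⟨Submodule.zero_mem _, X_pow_toNat_mem_homogDeg h₂⟩, ?_⟩
      simp only [htpyMap, LinearMap.coe_mk, AddHom.coe_mk, mul_zero, zero_add, add_zero,
        monomialPair, ← pow_add]
      congr 2 <;> omega

theorem finrank_HomMF (hk : k ≤ h) (hl : l ≤ h) :
    Module.finrank ℂ (HomMF h k l i j) =
      if 0 ≤ j - i ∧ 0 ≤ (l : ℤ) + j - (k + i) ∧ j - (k + i) < 0 ∧ (l : ℤ) + j - i - h < 0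
      then 1 else 0 := by
  by_cases hab : 0 ≤ j - i ∧ 0 ≤ (l : ℤ) + j - (k + i)
  · unfold HomMF
    rw [closedMor_eq_span hk hl hab.1 hab.2,
      Submodule.finrank_span_singleton_quotient_comap (monomialPair_ne_zero _ _),
      monomialPair_mem_nullHtpyMor_iff hk hl]
    split_ifs <;> omega
  · have : Subsingleton (closedMor h k l i j) := by
      rw [closedMor_eq_bot (by omega)]
      infer_instance
    rw [Module.finrank_zero_of_subsingleton, if_neg (by omega)]

end Morphisms

theorem serre_duality_dimensions_general (h : ℕ) (k l : ℕ)
    (hk' : k ≤ h - 1) (hl' : l ≤ h - 1) (i j : ℤ) :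
    Module.finrank ℂ (HomMF h k l i j) =
      Module.finrank ℂ (HomMF h l (h - k) j ((k : ℤ) + i - 1)) := by
  rw [finrank_HomMF (by omega) (by omega), finrank_HomMF (by omega) (Nat.sub_le h k),
    Nat.cast_sub (by omega : k ≤ h)]
  exact if_congr (by omega) rfl rfl

/-- Serre duality: `Hom(M_{k,i}, M_{l,j})` and `Hom(M_{l,j}, M_{h−k,k+i−1})` (the latter
object representing the shift `M_{k,i−1}[1]`) have the same dimension over `ℂ`. -/
theorem serre_duality_dimensions (h : ℕ) (hh : 2 ≤ h) (k l : ℕ)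
    (hk : 1 ≤ k) (hk' : k ≤ h - 1) (hl : 1 ≤ l) (hl' : l ≤ h - 1) (i j : ℤ) :
    Module.finrank ℂ (HomMF h k l i j) =
      Module.finrank ℂ (HomMF h l (h - k) j ((k : ℤ) + i - 1)) :=
  serre_duality_dimensions_general h k l hk' hl' i j
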